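/- Affine equivariance of the SNSS.sjd functional (Proposition 3(2)). Let p ≥ 1, let A and B be invertible real p×p matrices, let Λ₀ be a diagonal p×p matrix with strictly positive diagonal entries, and let Λ_{k,l} be diagonal p×p matrices for k = 1,…,K and l = 1,…,L such that for every pair i ≠ j there exists a pair (k,l) with (Λ_{k,l})ᵢᵢ/(Λ₀)ᵢᵢ ≠ (Λ_{k,l})ⱼⱼ/(Λ₀)ⱼⱼ. Set M₀ = A Λ₀ Aᵀ and M_{k,l} = A Λ_{k,l} Aᵀ. Suppose U is an orthogonal matrix such that U M₀^{-1/2} M_{k,l} M₀^{-1/2} Uᵀ is diagonal for all k, l, and U* is an orthogonal matrix such that U* (B M₀ Bᵀ)^{-1/2} (B M_{k,l} Bᵀ) (B M₀ Bᵀ)^{-1/2} U*ᵀ is diagonal for all k, l. Then there exists a signed permutation matrix Q such that U* (B M₀ Bᵀ)^{-1/2} = Q U M₀^{-1/2} B⁻¹. -/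

import Mathlib

open Matrix

/-- A signed permutation matrix: exactly one nonzero entry in each row and each
column, each such entry being `1` or `-1`. -/
def IsSignedPerm {p : ℕ} (Q : Matrix (Fin p) (Fin p) ℝ) : Prop :=
  (∀ i, ∃! j, Q i j ≠ 0) ∧ (∀ j, ∃! i, Q i j ≠ 0) ∧
  (∀ i j, Q i j ≠ 0 → Q i j = 1 ∨ Q i j = -1)

/-- A generalized permutation matrix: exactly one nonzero entry in each row and
each column. -/
def IsGenPerm {p : ℕ} (Q : Matrix (Fin p) (Fin p) ℝ) : Prop :=
  (∀ i, ∃! j, Q i j ≠ 0) ∧ (∀ j, ∃! i, Q i j ≠ 0)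

open scoped Classical in
/-- For a symmetric positive (semi)definite matrix `M`, `invSqrt M` is the inverse
of its unique positive semidefinite square root, i.e. `M^{-1/2}`. -/
noncomputable def invSqrt {p : ℕ} (M : Matrix (Fin p) (Fin p) ℝ) : Matrix (Fin p) (Fin p) ℝ :=
  if h : M.PosSemidef then
    (h.1.eigenvectorUnitary.1 * diagonal ((↑) ∘ (√·) ∘ h.1.eigenvalues) *
      (star h.1.eigenvectorUnitary : Matrix (Fin p) (Fin p) ℝ))⁻¹ else 0

section Aux

variable {p K L : ℕ}

private lemma mulT_apply (O O' : Matrix (Fin p) (Fin p) ℝ) (i i' : Fin p) :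
    (O * O'ᵀ) i i' = ∑ m, O i m * O' i' m := by
  simp [Matrix.mul_apply]

/-- An orthogonal matrix with exactly one nonzero entry in each row is a signed
permutation matrix. -/
private lemma isSignedPerm_of_rows (O : Matrix (Fin p) (Fin p) ℝ)
    (hO : O * Oᵀ = 1) (hrows : ∀ i, ∃! j, O i j ≠ 0) : IsSignedPerm O := by
  have hO' : Oᵀ * O = 1 := mul_eq_one_comm.mp hO
  have hsum : ∀ i i', (∑ m, O i m * O i' m) = (1 : Matrix (Fin p) (Fin p) ℝ) i i' := by
    intro i i'; rw [← mulT_apply, hO]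
  choose c hc huc using hrows
  have hzero : ∀ i m, m ≠ c i → O i m = 0 := by
    intro i m hm
    by_contra h; exact hm (huc i m h)
  have hsq : ∀ i, O i (c i) * O i (c i) = 1 := by
    intro i
    have h := hsum i i
    rw [Matrix.one_apply_eq] at h
    rwa [Finset.sum_eq_single (c i) (fun m _ hm => by rw [hzero i m hm]; ring)
      (by simp)] at h
  have hpm : ∀ i j, O i j ≠ 0 → O i j = 1 ∨ O i j = -1 := by
    intro i j hj
    have hj' : j = c i := huc i j hj
    subst hj'
    exact mul_self_eq_one_iff.mp (hsq i)
  refine ⟨fun i => ⟨c i, hc i, fun j hj => huc i j hj⟩, ?_, hpm⟩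
  intro j
  have h1 : (∑ i, O i j * O i j) = 1 := by
    have h := congrFun (congrFun hO' j) j
    simpa [Matrix.mul_apply, Matrix.one_apply, mul_comm] using h
  have hex : ∃ i, O i j ≠ 0 := by
    by_contra h
    push_neg at h
    simp [h] at h1
  obtain ⟨i, hi⟩ := hex
  refine ⟨i, hi, fun i' hi' => ?_⟩
  by_contra hne
  have hji' : j = c i' := huc i' j hi'
  have h := hsum i' i
  rw [Matrix.one_apply_ne hne] at h
  rw [Finset.sum_eq_single j (fun m _ hm => by rw [hzero i' m (hji' ▸ hm)]; ring)
    (by simp)] at h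
  exact (mul_ne_zero hi' hi) h

/-- An orthogonal joint diagonalizer of a separating family of diagonal matrices has
exactly one nonzero entry in each row. -/
private lemma rows_unique_of_jointDiag (O : Matrix (Fin p) (Fin p) ℝ)
    (r : Fin K → Fin L → Fin p → ℝ) (hO : O * Oᵀ = 1)
    (hd : ∀ k l, (O * Matrix.diagonal (r k l) * Oᵀ).IsDiag)
    (hsep : ∀ m m', m ≠ m' → ∃ k l, r k l m ≠ r k l m') :
    ∀ i, ∃! j, O i j ≠ 0 := by
  have hO' : Oᵀ * O = 1 := mul_eq_one_comm.mp hO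
  have key : ∀ k l i m, O i m * r k l m = (O * Matrix.diagonal (r k l) * Oᵀ) i i * O i m := by
    intro k l i m
    have h1 : O * Matrix.diagonal (r k l) = (O * Matrix.diagonal (r k l) * Oᵀ) * O := by
      rw [Matrix.mul_assoc (O * Matrix.diagonal (r k l)) Oᵀ O, hO', Matrix.mul_one]
    have h2 := congrFun (congrFun h1 i) m
    rw [Matrix.mul_diagonal] at h2
    have h3 : ((O * Matrix.diagonal (r k l) * Oᵀ) * O) i m
        = (O * Matrix.diagonal (r k l) * Oᵀ) i i * O i m := by
      conv_lhs => rw [← (hd k l).diagonal_diag]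
      rw [Matrix.diagonal_mul]
      rfl
    rw [h3] at h2
    exact h2
  intro i
  have hex : ∃ m, O i m ≠ 0 := by
    by_contra h
    push_neg at h
    have h1 := congrFun (congrFun hO i) i
    simp [Matrix.mul_apply, h, Matrix.one_apply] at h1
  obtain ⟨m, hm⟩ := hex
  refine ⟨m, hm, fun m' hm' => ?_⟩
  by_contra hne
  obtain ⟨k, l, hkl⟩ := hsep m' m hne
  have f1 : r k l m' = (O * Matrix.diagonal (r k l) * Oᵀ) i i :=
    mul_left_cancel₀ hm' (by rw [key k l i m']; ring)
  have f2 : r k l m = (O * Matrix.diagonal (r k l) * Oᵀ) i i :=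
    mul_left_cancel₀ hm (by rw [key k l i m]; ring)
  exact hkl (f1.trans f2.symm)

/-- The product of a signed permutation matrix with the transpose of another
(both orthogonal) is a signed permutation matrix. -/
private lemma isSignedPerm_mul_transpose {O₁ O₂ : Matrix (Fin p) (Fin p) ℝ}
    (h₁ : IsSignedPerm O₁) (h₂ : IsSignedPerm O₂)
    (hO₁ : O₁ * O₁ᵀ = 1) (hO₂ : O₂ * O₂ᵀ = 1) : IsSignedPerm (O₂ * O₁ᵀ) := by
  have hO₁' : O₁ᵀ * O₁ = 1 := mul_eq_one_comm.mp hO₁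
  apply isSignedPerm_of_rows
  · calc (O₂ * O₁ᵀ) * (O₂ * O₁ᵀ)ᵀ = O₂ * (O₁ᵀ * O₁) * O₂ᵀ := by
          simp only [Matrix.transpose_mul, Matrix.transpose_transpose, Matrix.mul_assoc]
      _ = 1 := by rw [hO₁', Matrix.mul_one, hO₂]
  · intro i
    obtain ⟨m, hm, hum⟩ := h₂.1 i
    have hzero : ∀ m', m' ≠ m → O₂ i m' = 0 := by
      intro m' hm'
      by_contra h; exact hm' (hum m' h)
    have happ : ∀ j, (O₂ * O₁ᵀ) i j = O₂ i m * O₁ j m := by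
      intro j
      rw [mulT_apply O₂ O₁ i j]
      exact Finset.sum_eq_single m (fun m' _ hm' => by rw [hzero m' hm']; ring) (by simp)
    obtain ⟨j, hj, huj⟩ := h₁.2.1 m
    refine ⟨j, ?_, ?_⟩
    · show (O₂ * O₁ᵀ) i j ≠ 0
      rw [happ j]; exact mul_ne_zero hm hj
    · intro j' hj'
      rw [happ j'] at hj'
      exact huj j' (right_ne_zero_of_mul hj')

/-- Basic properties of `invSqrt` for an invertible positive semidefinite matrix. -/
private lemma invSqrt_props {M : Matrix (Fin p) (Fin p) ℝ} (hM : M.PosSemidef)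
    (hdet : IsUnit M.det) :
    (invSqrt M)ᵀ = invSqrt M ∧ invSqrt M * M * invSqrt M = 1 ∧
      invSqrt M * invSqrt M = M⁻¹ := by
  set V : Matrix (Fin p) (Fin p) ℝ := hM.1.eigenvectorUnitary.1 with hV
  set D : Matrix (Fin p) (Fin p) ℝ := diagonal ((↑) ∘ (√·) ∘ hM.1.eigenvalues) with hD
  have hIS : invSqrt M = (V * D * star V)⁻¹ := by rw [invSqrt, dif_pos hM]
  have hVV : star V * V = 1 := Matrix.mem_unitaryGroup_iff'.mp hM.1.eigenvectorUnitary.2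
  have hDD : D * D = diagonal (RCLike.ofReal ∘ hM.1.eigenvalues) := by
    rw [hD, diagonal_mul_diagonal]; congr 1; funext i
    simp [Real.mul_self_sqrt (hM.eigenvalues_nonneg i)]
  have hss : (V * D * star V) * (V * D * star V) = M := by
    conv_rhs => rw [hM.1.spectral_theorem, Unitary.conjStarAlgAut_apply]
    rw [← hDD]
    simp only [Matrix.mul_assoc]
    rw [← Matrix.mul_assoc (star V) V, hVV, Matrix.one_mul]
  have hdets : IsUnit (V * D * star V).det := by
    have h : (V * D * star V).det * (V * D * star V).det = M.det := by
      rw [← Matrix.det_mul, hss]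
    exact isUnit_of_mul_isUnit_left (h.symm ▸ hdet)
  have hsymm : (V * D * star V)ᵀ = V * D * star V := by
    rw [star_eq_conjTranspose, conjTranspose_eq_transpose_of_trivial]
    simp only [Matrix.transpose_mul, Matrix.transpose_transpose, hD, diagonal_transpose,
      Matrix.mul_assoc]
  have key : ∀ s : Matrix (Fin p) (Fin p) ℝ, s * s = M → IsUnit s.det → sᵀ = s →
      (s⁻¹)ᵀ = s⁻¹ ∧ s⁻¹ * M * s⁻¹ = 1 ∧ s⁻¹ * s⁻¹ = M⁻¹ := by
    intro s h1 h2 h3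
    refine ⟨?_, ?_, ?_⟩
    · rw [Matrix.transpose_nonsing_inv, h3]
    · rw [← h1, ← Matrix.mul_assoc, Matrix.nonsing_inv_mul _ h2, Matrix.one_mul,
        Matrix.mul_nonsing_inv _ h2]
    · rw [← h1, Matrix.mul_inv_rev]
  rw [hIS]
  exact key (V * D * star V) hss hdets hsymm

/-- Orthogonality of `W * S * C * Λh`. -/
private lemma ortho_aux (W S C Λh Λz : Matrix (Fin p) (Fin p) ℝ)
    (hW : W * Wᵀ = 1) (hSt : Sᵀ = S) (hΛt : Λhᵀ = Λh) (hΛ2 : Λh * Λh = Λz)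
    (hS : S * (C * Λz * Cᵀ) * S = 1) :
    (W * S * C * Λh) * (W * S * C * Λh)ᵀ = 1 := by
  have hS' : ∀ X, S * (C * (Λz * (Cᵀ * (S * X)))) = X := by
    intro X
    have h : (S * (C * Λz * Cᵀ) * S) * X = X := by rw [hS, Matrix.one_mul]
    simpa only [Matrix.mul_assoc] using h
  have hΛ' : ∀ X, Λh * (Λh * X) = Λz * X := by
    intro X; rw [← Matrix.mul_assoc, hΛ2]
  calc (W * S * C * Λh) * (W * S * C * Λh)ᵀ
      = W * (S * (C * (Λh * (Λh * (Cᵀ * (S * Wᵀ)))))) := by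
        simp only [Matrix.transpose_mul, Matrix.transpose_transpose, hSt, hΛt,
          Matrix.mul_assoc]
    _ = W * (S * (C * (Λz * (Cᵀ * (S * Wᵀ))))) := by rw [hΛ']
    _ = W * Wᵀ := by rw [hS']
    _ = 1 := hW

/-- Transfer of diagonality. -/
private lemma diag_aux (W S C Λh Λkl R : Matrix (Fin p) (Fin p) ℝ)
    (hSt : Sᵀ = S) (hΛt : Λhᵀ = Λh) (hmid : Λh * R * Λh = Λkl)
    (h : (W * S * (C * Λkl * Cᵀ) * S * Wᵀ).IsDiag) :
    ((W * S * C * Λh) * R * (W * S * C * Λh)ᵀ).IsDiag := by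
  have hmid' : ∀ X, Λh * (R * (Λh * X)) = Λkl * X := by
    intro X
    have hh : (Λh * R * Λh) * X = Λkl * X := by rw [hmid]
    simpa only [Matrix.mul_assoc] using hh
  have heq : (W * S * C * Λh) * R * (W * S * C * Λh)ᵀ
      = W * S * (C * Λkl * Cᵀ) * S * Wᵀ := by
    calc (W * S * C * Λh) * R * (W * S * C * Λh)ᵀ
        = W * (S * (C * (Λh * (R * (Λh * (Cᵀ * (S * Wᵀ))))))) := by
          simp only [Matrix.transpose_mul, Matrix.transpose_transpose, hSt, hΛt,
            Matrix.mul_assoc]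
      _ = W * (S * (C * (Λkl * (Cᵀ * (S * Wᵀ))))) := by rw [hmid']
      _ = W * S * (C * Λkl * Cᵀ) * S * Wᵀ := by simp only [Matrix.mul_assoc]
  rw [heq]
  exact h

end Aux

/-- Affine equivariance of the SNSS.sjd functional. -/
theorem snss_sjd_affine_equivariant {p K L : ℕ} (hp : 1 ≤ p)
    (A B Λ₀ U Ustar : Matrix (Fin p) (Fin p) ℝ)
    (Λ : Fin K → Fin L → Matrix (Fin p) (Fin p) ℝ)
    (hA : IsUnit A) (hB : IsUnit B)
    (hΛ₀ : Λ₀.IsDiag) (hΛ₀pos : ∀ i, 0 < Λ₀ i i)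
    (hΛ : ∀ k l, (Λ k l).IsDiag)
    (hsep : ∀ i j, i ≠ j → ∃ k l, Λ k l i i / Λ₀ i i ≠ Λ k l j j / Λ₀ j j)
    (hU : U * Uᵀ = 1)
    (hdiag : ∀ k l, (U * invSqrt (A * Λ₀ * Aᵀ) * (A * Λ k l * Aᵀ) *
      invSqrt (A * Λ₀ * Aᵀ) * Uᵀ).IsDiag)
    (hUs : Ustar * Ustarᵀ = 1)
    (hdiags : ∀ k l, (Ustar * invSqrt (B * (A * Λ₀ * Aᵀ) * Bᵀ) *
      (B * (A * Λ k l * Aᵀ) * Bᵀ) * invSqrt (B * (A * Λ₀ * Aᵀ) * Bᵀ) * Ustarᵀ).IsDiag) :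
    ∃ Q : Matrix (Fin p) (Fin p) ℝ, IsSignedPerm Q ∧
      Ustar * invSqrt (B * (A * Λ₀ * Aᵀ) * Bᵀ) = Q * U * invSqrt (A * Λ₀ * Aᵀ) * B⁻¹ := by
  classical
  set M₀ := A * Λ₀ * Aᵀ with hM₀def
  set N := B * M₀ * Bᵀ with hNdef
  set S := invSqrt M₀ with hSdef
  set T := invSqrt N with hTdef
  set Λh : Matrix (Fin p) (Fin p) ℝ := Matrix.diagonal (fun i => Real.sqrt (Λ₀ i i))
    with hΛhdef
  set r : Fin K → Fin L → Fin p → ℝ := fun k l i => Λ k l i i / Λ₀ i i with hrdef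
  have hAdet : IsUnit A.det := (Matrix.isUnit_iff_isUnit_det A).mp hA
  have hBdet : IsUnit B.det := (Matrix.isUnit_iff_isUnit_det B).mp hB
  -- Λ₀ as a diagonal matrix
  have hΛ₀diag : Matrix.diagonal (fun i => Λ₀ i i) = Λ₀ := hΛ₀.diagonal_diag
  have hΛ₀psd : Λ₀.PosSemidef := by
    rw [← hΛ₀diag]
    exact Matrix.posSemidef_diagonal_iff.mpr fun i => (hΛ₀pos i).le
  have hΛ₀det : IsUnit Λ₀.det := by
    rw [← hΛ₀diag, Matrix.det_diagonal]
    exact (Finset.prod_pos fun i _ => hΛ₀pos i).ne'.isUnit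
  -- positive semidefiniteness and invertibility of M₀ and N
  have hM₀psd : M₀.PosSemidef := by
    have h := hΛ₀psd.mul_mul_conjTranspose_same A
    rwa [conjTranspose_eq_transpose_of_trivial] at h
  have hM₀det : IsUnit M₀.det := by
    rw [hM₀def, Matrix.det_mul, Matrix.det_mul, Matrix.det_transpose]
    exact (hAdet.mul hΛ₀det).mul hAdet
  have hNpsd : N.PosSemidef := by
    have h := hM₀psd.mul_mul_conjTranspose_same B
    rwa [conjTranspose_eq_transpose_of_trivial] at h
  have hNdet : IsUnit N.det := by
    rw [hNdef, Matrix.det_mul, Matrix.det_mul, Matrix.det_transpose]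
    exact (hBdet.mul hM₀det).mul hBdet
  obtain ⟨hSt, hS1, hSS⟩ := invSqrt_props hM₀psd hM₀det
  obtain ⟨hTt, hT1, hTT⟩ := invSqrt_props hNpsd hNdet
  -- properties of Λh
  have hΛht : Λhᵀ = Λh := Matrix.diagonal_transpose _
  have hΛh2 : Λh * Λh = Λ₀ := by
    rw [hΛhdef, Matrix.diagonal_mul_diagonal]
    conv_rhs => rw [← hΛ₀diag]
    exact congrArg Matrix.diagonal (funext fun i => Real.mul_self_sqrt (hΛ₀pos i).le)
  have hmid : ∀ k l, Λh * Matrix.diagonal (r k l) * Λh = Λ k l := by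
    intro k l
    rw [hΛhdef, Matrix.diagonal_mul_diagonal, Matrix.diagonal_mul_diagonal]
    conv_rhs => rw [← (hΛ k l).diagonal_diag]
    refine congrArg Matrix.diagonal (funext fun i => ?_)
    have h0 : Λ₀ i i ≠ 0 := (hΛ₀pos i).ne'
    have hs : Real.sqrt (Λ₀ i i) * Real.sqrt (Λ₀ i i) = Λ₀ i i :=
      Real.mul_self_sqrt (hΛ₀pos i).le
    show Real.sqrt (Λ₀ i i) * r k l i * Real.sqrt (Λ₀ i i) = Λ k l i i
    have hr : Real.sqrt (Λ₀ i i) * r k l i * Real.sqrt (Λ₀ i i)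
        = (Real.sqrt (Λ₀ i i) * Real.sqrt (Λ₀ i i)) * Λ k l i i / Λ₀ i i := by
      rw [hrdef]; ring
    rw [hr, hs, mul_comm, mul_div_assoc, div_self h0, mul_one]
  -- the two auxiliary orthogonal matrices
  set O₁ := U * S * A * Λh with hO₁def
  set O₂ := Ustar * T * (B * A) * Λh with hO₂def
  have hNalt : (B * A) * Λ₀ * (B * A)ᵀ = N := by
    rw [hNdef, hM₀def]
    simp only [Matrix.transpose_mul, Matrix.mul_assoc]
  have hO₁o : O₁ * O₁ᵀ = 1 :=
    ortho_aux U S A Λh Λ₀ hU hSt hΛht hΛh2 (by rw [← hM₀def]; exact hS1)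
  have hO₂o : O₂ * O₂ᵀ = 1 :=
    ortho_aux Ustar T (B * A) Λh Λ₀ hUs hTt hΛht hΛh2 (by rw [hNalt]; exact hT1)
  have hO₁d : ∀ k l, (O₁ * Matrix.diagonal (r k l) * O₁ᵀ).IsDiag := by
    intro k l
    exact diag_aux U S A Λh (Λ k l) (Matrix.diagonal (r k l)) hSt hΛht (hmid k l)
      (hdiag k l)
  have hO₂d : ∀ k l, (O₂ * Matrix.diagonal (r k l) * O₂ᵀ).IsDiag := by
    intro k l
    apply diag_aux Ustar T (B * A) Λh (Λ k l) (Matrix.diagonal (r k l)) hTt hΛht (hmid k l)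
    have heq : Ustar * T * ((B * A) * Λ k l * (B * A)ᵀ) * T * Ustarᵀ
        = Ustar * T * (B * (A * Λ k l * Aᵀ) * Bᵀ) * T * Ustarᵀ := by
      simp only [Matrix.transpose_mul, Matrix.mul_assoc]
    rw [heq]
    exact hdiags k l
  have hsep' : ∀ m m', m ≠ m' → ∃ k l, r k l m ≠ r k l m' := fun m m' h => hsep m m' h
  have hO₁sp : IsSignedPerm O₁ :=
    isSignedPerm_of_rows O₁ hO₁o (rows_unique_of_jointDiag O₁ r hO₁o hO₁d hsep')
  have hO₂sp : IsSignedPerm O₂ :=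
    isSignedPerm_of_rows O₂ hO₂o (rows_unique_of_jointDiag O₂ r hO₂o hO₂d hsep')
  refine ⟨O₂ * O₁ᵀ, isSignedPerm_mul_transpose hO₁sp hO₂sp hO₁o hO₂o, ?_⟩
  -- final algebra
  have hU' : ∀ X : Matrix (Fin p) (Fin p) ℝ, Uᵀ * (U * X) = X := by
    intro X
    have h : (Uᵀ * U) * X = X := by rw [mul_eq_one_comm.mp hU, Matrix.one_mul]
    simpa only [Matrix.mul_assoc] using h
  have hΛ' : ∀ X : Matrix (Fin p) (Fin p) ℝ, Λh * (Λh * X) = Λ₀ * X := by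
    intro X; rw [← Matrix.mul_assoc, hΛh2]
  have hSS' : ∀ X : Matrix (Fin p) (Fin p) ℝ, S * (S * X) = M₀⁻¹ * X := by
    intro X; rw [← Matrix.mul_assoc, hSS]
  have hM' : ∀ X : Matrix (Fin p) (Fin p) ℝ, A * (Λ₀ * (Aᵀ * (M₀⁻¹ * X))) = X := by
    intro X
    have h : (A * Λ₀ * Aᵀ) * (M₀⁻¹ * X) = X := by
      rw [← Matrix.mul_assoc, ← hM₀def, Matrix.mul_nonsing_inv _ hM₀det, Matrix.one_mul]
    simpa only [Matrix.mul_assoc] using h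
  symm
  calc (O₂ * O₁ᵀ) * U * S * B⁻¹
      = Ustar * (T * (B * (A * (Λh * (Λh * (Aᵀ * (S * (Uᵀ * (U * (S * B⁻¹)))))))))) := by
        rw [hO₁def, hO₂def]
        simp only [Matrix.transpose_mul, Matrix.transpose_transpose, hSt, hΛht,
          Matrix.mul_assoc, show Sᵀ = S from hSt]
    _ = Ustar * (T * (B * (A * (Λ₀ * (Aᵀ * (S * (S * B⁻¹))))))) := by rw [hU', hΛ']
    _ = Ustar * (T * (B * (A * (Λ₀ * (Aᵀ * (M₀⁻¹ * B⁻¹)))))) := by rw [hSS']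
    _ = Ustar * (T * (B * B⁻¹)) := by rw [hM']
    _ = Ustar * T := by rw [Matrix.mul_nonsing_inv _ hBdet, Matrix.mul_one]
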